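/- Let ρ : ℝ^d → ℝ be a smooth positive density, let α, β, λ be real numbers with λ ≠ 0 and β ≠ 0, and let u : ℝ^d → ℝ and v : ℝ^d → ℝ^d be smooth functions satisfying the strong-form linearized GAN eigenvalue system: −α ρ(x) u(x) + β ∇·(ρ(x) v(x)) = λ ρ(x) u(x) and β ρ(x) ∇u(x) = λ ρ(x) v(x) for all x ∈ ℝ^d. Then u satisfies the weighted Laplacian eigenvalue equation ∇·(ρ(x) ∇u(x)) = −ξ ρ(x) u(x) for all x, with ξ = −(λ² + α λ)/β², i.e., λ is a root of the quadratic equation λ² + α λ + β² ξ = 0. -/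

import Mathlib

/-- The divergence `∇ · F` of a vector field `F` on `ℝ^d`. -/
noncomputable def vdiv {d : ℕ}
    (F : EuclideanSpace ℝ (Fin d) → EuclideanSpace ℝ (Fin d))
    (x : EuclideanSpace ℝ (Fin d)) : ℝ :=
  ∑ i, fderiv ℝ F x (EuclideanSpace.single i 1) i

lemma vdiv_const_smul {d : ℕ}
    (F : EuclideanSpace ℝ (Fin d) → EuclideanSpace ℝ (Fin d))
    (hF : Differentiable ℝ F) (c : ℝ) (x : EuclideanSpace ℝ (Fin d)) :
    vdiv (fun y => c • F y) x = c * vdiv F x := by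
  unfold vdiv
  rw [fderiv_fun_const_smul (hF x), Finset.mul_sum]
  simp

/-- Converse direction of the spectrum theorem for the linearized GAN: if
`(u, v)` solves the strong-form eigenvalue system
`−α ρ u + β ∇·(ρ v) = λ ρ u`, `β ρ ∇u = λ ρ v` with `λ ≠ 0`, `β ≠ 0`, then `u`
is an eigenfunction of the weighted Laplacian, `∇·(ρ ∇u) = −ξ ρ u`, with
`ξ = −(λ² + αλ)/β²`, i.e. `λ` is a root of `λ² + αλ + β²ξ = 0`. -/
theorem laplacian_eigenfunction_of_lgan_eigenfunction {d : ℕ}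
    (ρ : EuclideanSpace ℝ (Fin d) → ℝ) (hρ : ContDiff ℝ (⊤ : ℕ∞) ρ)
    (hρpos : ∀ x, 0 < ρ x)
    (α β lam : ℝ) (hlam : lam ≠ 0) (hβ : β ≠ 0)
    (u : EuclideanSpace ℝ (Fin d) → ℝ) (hu : ContDiff ℝ (⊤ : ℕ∞) u)
    (v : EuclideanSpace ℝ (Fin d) → EuclideanSpace ℝ (Fin d))
    (hv : ContDiff ℝ (⊤ : ℕ∞) v)
    (heq1 : ∀ x, -α * (ρ x * u x) + β * vdiv (fun y => ρ y • v y) x = lam * (ρ x * u x))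
    (heq2 : ∀ x, β • ρ x • gradient u x = lam • ρ x • v x)
    (ξ : ℝ) (hξ : ξ = -(lam ^ 2 + α * lam) / β ^ 2) :
    (∀ x, vdiv (fun y => ρ y • gradient u y) x = -ξ * (ρ x * u x)) ∧
    lam ^ 2 + α * lam + β ^ 2 * ξ = 0 := by
  constructor
  · intro x
    have hfun : (fun y => ρ y • gradient u y) =
        fun y => (lam / β) • (ρ y • v y) := by
      funext y
      have h := heq2 y
      have : ρ y • gradient u y = β⁻¹ • (lam • ρ y • v y) := by
        rw [← h, smul_smul, inv_mul_cancel₀ hβ, one_smul]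
      rw [this, smul_smul, inv_mul_eq_div]
    have hdiff : Differentiable ℝ (fun y => ρ y • v y) :=
      (hρ.smul hv).differentiable (by simp)
    rw [hfun, vdiv_const_smul _ hdiff]
    have h1 := heq1 x
    have hvd : vdiv (fun y => ρ y • v y) x = (lam + α) / β * (ρ x * u x) := by
      field_simp
      linarith [h1]
    rw [hvd, hξ]
    field_simp
  · rw [hξ]
    field_simp
    ring
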